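/- arXiv:1510.05403 — 7 statements merged into one kernel-verified Lean document; each statement's English description precedes it below -/
import Mathlib

section
/- For every graph G, box(G) = min{|C| : C is a cointerval edge covering of Ḡ}; equivalently, box(G) ≤ k if and only if there exists a cointerval edge covering C of Ḡ with |C| = k. -/
open scoped Classical

/-- A graph is an interval graph if it is the intersection graph of closed
intervals on the real line. -/
def IsIntervalGraph {V : Type*} (G : SimpleGraph V) : Prop :=
  ∃ f : V → ℝ × ℝ, (∀ v, (f v).1 ≤ (f v).2) ∧
    ∀ u v, u ≠ v →
      (G.Adj u v ↔ max (f u).1 (f v).1 ≤ min (f u).2 (f v).2)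

/-- A graph is cointerval if its complement is an interval graph. -/
def IsCointerval {V : Type*} (G : SimpleGraph V) : Prop :=
  IsIntervalGraph Gᶜ

/-- `G` is isomorphic to the intersection graph of a family of axis-parallel
boxes in `ℝ^k`. -/
def HasBoxRep {V : Type*} (G : SimpleGraph V) (k : ℕ) : Prop :=
  ∃ f : V → Fin k → ℝ × ℝ, (∀ v i, (f v i).1 ≤ (f v i).2) ∧
    ∀ u v, u ≠ v →
      (G.Adj u v ↔ ∀ i, max (f u i).1 (f v i).1 ≤ min (f u i).2 (f v i).2)

/-- The boxicity of a graph. -/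
noncomputable def boxicity {V : Type*} (G : SimpleGraph V) : ℕ :=
  sInf {k | HasBoxRep G k}

/-- The `s`-fold boxicity: minimum size of a multiset of cointerval subgraphs
of the complement covering each edge of the complement at least `s` times. -/
noncomputable def boxS {V : Type*} (G : SimpleGraph V) (s : ℕ) : ℕ :=
  sInf {k | ∃ C : Multiset (SimpleGraph V), C.card = k ∧
    (∀ H ∈ C, H ≤ Gᶜ ∧ IsCointerval H) ∧
    ∀ e ∈ Gᶜ.edgeSet, s ≤ Multiset.countP (fun H => e ∈ H.edgeSet) C}

/-- A hyperedge of the hypergraph `H_G`: a set of edges of `Ḡ` inducing a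
cointerval subgraph of `Ḡ`. -/
def IsHyperedge {V : Type*} (G : SimpleGraph V) (E : Finset (Sym2 V)) : Prop :=
  ↑E ⊆ Gᶜ.edgeSet ∧ IsCointerval (SimpleGraph.fromEdgeSet (↑E : Set (Sym2 V)))

/-- The fractional boxicity of `G`: the value of the LP relaxation of the
covering program of the hypergraph `H_G`. -/
noncomputable def fracBoxicity {V : Type*} [Fintype V] [DecidableEq V]
    (G : SimpleGraph V) : ℝ :=
  sInf {r | ∃ x : Finset (Sym2 V) → ℝ, (∀ E, 0 ≤ x E) ∧
    (∀ E, ¬ IsHyperedge G E → x E = 0) ∧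
    (∀ e ∈ Gᶜ.edgeFinset, 1 ≤ ∑ E : Finset (Sym2 V), if e ∈ E then x E else 0) ∧
    r = ∑ E : Finset (Sym2 V), x E}

/-- `Ḡ` is edge-transitive. -/
def EdgeTransitiveCompl {V : Type*} (G : SimpleGraph V) : Prop :=
  ∀ e ∈ Gᶜ.edgeSet, ∀ f ∈ Gᶜ.edgeSet, ∃ π : Equiv.Perm V,
    (∀ u v, Gᶜ.Adj u v ↔ Gᶜ.Adj (π u) (π v)) ∧ Sym2.map π e = f


/-- The complete multipartite graph with parts `Fin (n i)`. -/
def completeMultipartite (k : ℕ) (n : Fin k → ℕ) :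
    SimpleGraph (Σ i : Fin k, Fin (n i)) :=
  SimpleGraph.fromRel (fun a b => a.1 ≠ b.1)

/-- The disjoint union of cliques `K_{n 0} ∪ ... ∪ K_{n (k-1)}`. -/
def cliqueUnion (k : ℕ) (n : Fin k → ℕ) :
    SimpleGraph (Σ i : Fin k, Fin (n i)) :=
  SimpleGraph.fromRel (fun a b => a.1 = b.1)

/-- The fractional matching number of the hypergraph `H_G`. -/
noncomputable def fracMatching {V : Type*} [Fintype V] [DecidableEq V]
    (G : SimpleGraph V) : ℝ :=
  sSup {r | ∃ y : Sym2 V → ℝ, (∀ e, 0 ≤ y e) ∧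
    (∀ e ∉ Gᶜ.edgeFinset, y e = 0) ∧
    (∀ E : Finset (Sym2 V), IsHyperedge G E → ∑ e ∈ E, y e ≤ 1) ∧
    r = ∑ e ∈ Gᶜ.edgeFinset, y e}

/-!
Projecting a box representation onto its coordinates writes `G` as an intersection of `k`
interval graphs, and conversely any `k` interval graphs with intersection `G` assemble into a box
representation in `ℝ^k`. Taking complements, this says exactly that `Ḡ` is the union of `k`
cointerval graphs, i.e. that `Ḡ` has a cointerval edge covering of size `k`. Padding a covering
with empty graphs (cointerval, as their complement is complete) shows that the sizes of coverings
are upward closed, and a finite graph has the covering by its single edges, so the least size is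
attained and `box(G) ≤ k` exactly when a covering of size `k` exists.
-/

theorem Multiset.exists_card_eq_iff_exists_fin {α : Type*} {k : ℕ} {p : Multiset α → Prop} :
    (∃ C : Multiset α, C.card = k ∧ p C) ↔ ∃ f : Fin k → α, p (Finset.univ.val.map f) := by
  refine ⟨?_, fun ⟨f, hf⟩ => ⟨_, by simp, hf⟩⟩
  rintro ⟨C, rfl, hC⟩
  obtain ⟨l, rfl⟩ : ∃ l : List α, (l : Multiset α) = C := ⟨C.toList, C.coe_toList⟩
  refine ⟨fun i => l.get (Fin.cast (Multiset.coe_card l) i), ?_⟩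
  rwa [Fin.univ_val_map, ← List.ofFn_congr (Multiset.coe_card l).symm, List.ofFn_get]

open SimpleGraph

section

variable {V : Type*}

theorem SimpleGraph.iSup_eq_iff {ι : Sort*} (H : ι → SimpleGraph V) (K : SimpleGraph V) :
    ⨆ i, H i = K ↔ (∀ i, H i ≤ K) ∧ ∀ e ∈ K.edgeSet, ∃ i, e ∈ (H i).edgeSet := by
  rw [le_antisymm_iff, iSup_le_iff, ← edgeSet_subset_edgeSet, edgeSet_iSup]
  simp only [Set.subset_def, Set.mem_iUnion]

def intervalGraph (f : V → ℝ × ℝ) : SimpleGraph V where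
  Adj u v := u ≠ v ∧ max (f u).1 (f v).1 ≤ min (f u).2 (f v).2
  symm := ⟨fun u v h => ⟨h.1.symm, by rw [max_comm, min_comm]; exact h.2⟩⟩

theorem eq_intervalGraph_iff (G : SimpleGraph V) (f : V → ℝ × ℝ) :
    G = intervalGraph f ↔
      ∀ u v, u ≠ v → (G.Adj u v ↔ max (f u).1 (f v).1 ≤ min (f u).2 (f v).2) := by
  simp only [SimpleGraph.ext_iff, funext_iff, eq_iff_iff, intervalGraph]
  refine forall_congr' fun u => forall_congr' fun v => ?_
  by_cases huv : u = v <;> simp [huv]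

theorem eq_iInf_intervalGraph_iff {ι : Type*} (G : SimpleGraph V) (f : ι → V → ℝ × ℝ) :
    G = ⨅ i, intervalGraph (f i) ↔ ∀ u v, u ≠ v →
      (G.Adj u v ↔ ∀ i, max (f i u).1 (f i v).1 ≤ min (f i u).2 (f i v).2) := by
  simp only [SimpleGraph.ext_iff, funext_iff, eq_iff_iff, iInf_adj, intervalGraph]
  refine forall_congr' fun u => forall_congr' fun v => ?_
  by_cases huv : u = v <;> simp [huv]

theorem isIntervalGraph_iff {G : SimpleGraph V} :
    IsIntervalGraph G ↔ ∃ f : V → ℝ × ℝ, (∀ v, (f v).1 ≤ (f v).2) ∧ G = intervalGraph f := by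
  simp only [IsIntervalGraph, eq_intervalGraph_iff]

theorem hasBoxRep_iff_eq_iInf {G : SimpleGraph V} {k : ℕ} :
    HasBoxRep G k ↔ ∃ I : Fin k → SimpleGraph V, (∀ i, IsIntervalGraph (I i)) ∧ G = ⨅ i, I i := by
  simp only [isIntervalGraph_iff]
  constructor
  · rintro ⟨f, hf, hG⟩
    exact ⟨fun i => intervalGraph (f · i), fun i => ⟨_, (hf · i), rfl⟩,
      (eq_iInf_intervalGraph_iff G fun i v => f v i).2 hG⟩
  · rintro ⟨I, hI, rfl⟩
    choose f hf hI using hI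
    simp only [hI]
    exact ⟨fun v i => f i v, fun v i => hf i v, (eq_iInf_intervalGraph_iff _ f).1 rfl⟩

theorem isCointerval_compl_iff {H : SimpleGraph V} : IsCointerval Hᶜ ↔ IsIntervalGraph H := by
  rw [IsCointerval, compl_compl]

theorem hasBoxRep_iff_iSup_eq_compl {G : SimpleGraph V} {k : ℕ} :
    HasBoxRep G k ↔ ∃ H : Fin k → SimpleGraph V, (∀ i, IsCointerval (H i)) ∧ ⨆ i, H i = Gᶜ := by
  rw [hasBoxRep_iff_eq_iInf]
  constructor
  · rintro ⟨I, hI, rfl⟩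
    exact ⟨fun i => (I i)ᶜ, fun i => isCointerval_compl_iff.2 (hI i), compl_iInf.symm⟩
  · rintro ⟨H, hH, hG⟩
    refine ⟨fun i => (H i)ᶜ, fun i => ?_, by rw [← compl_iSup, hG, compl_compl]⟩
    rw [← isCointerval_compl_iff, compl_compl]
    exact hH i

theorem isCointerval_bot : IsCointerval (⊥ : SimpleGraph V) :=
  ⟨fun _ => (0, 0), fun _ => le_rfl, fun u v huv => by simp [huv]⟩

theorem isCointerval_edge (a b : V) : IsCointerval (edge a b) := by
  -- `a` and `b` get disjoint points, every other vertex an interval meeting both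
  refine ⟨fun x => if x = a then (0, 0) else if x = b then (1, 1) else (0, 1), ?_, ?_⟩
  · intro v; dsimp only; split_ifs <;> norm_num
  · intro u v huv
    rw [compl_adj, edge_adj]
    by_cases hua : u = a <;> by_cases hub : u = b <;>
      by_cases hva : v = a <;> by_cases hvb : v = b <;>
      subst_vars <;> simp_all

def IsCointervalEdgeCovering (K : SimpleGraph V) (C : Multiset (SimpleGraph V)) : Prop :=
  (∀ H ∈ C, H ≤ K ∧ IsCointerval H) ∧ ∀ e ∈ K.edgeSet, ∃ H ∈ C, e ∈ H.edgeSet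

theorem isCointervalEdgeCovering_map_iff {ι : Type*} [Fintype ι] (K : SimpleGraph V)
    (H : ι → SimpleGraph V) :
    IsCointervalEdgeCovering K (Finset.univ.val.map H) ↔
      (∀ i, IsCointerval (H i)) ∧ ⨆ i, H i = K := by
  simp only [IsCointervalEdgeCovering, iSup_eq_iff, Multiset.mem_map, Finset.mem_val,
    Finset.mem_univ, true_and, forall_exists_index, forall_apply_eq_imp_iff, exists_exists_eq_and,
    forall_and]
  tauto

theorem hasBoxRep_iff_exists_isCointervalEdgeCovering {G : SimpleGraph V} {k : ℕ} :
    HasBoxRep G k ↔ ∃ C, C.card = k ∧ IsCointervalEdgeCovering Gᶜ C := by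
  simp only [Multiset.exists_card_eq_iff_exists_fin, isCointervalEdgeCovering_map_iff,
    hasBoxRep_iff_iSup_eq_compl]

theorem IsCointervalEdgeCovering.add_replicate_bot {K : SimpleGraph V}
    {C : Multiset (SimpleGraph V)} (hC : IsCointervalEdgeCovering K C) (n : ℕ) :
    IsCointervalEdgeCovering K (C + Multiset.replicate n ⊥) := by
  refine ⟨fun H hH => ?_, fun e he => ?_⟩
  · rcases Multiset.mem_add.1 hH with hH | hH
    · exact hC.1 H hH
    · rw [Multiset.eq_of_mem_replicate hH]
      exact ⟨bot_le, isCointerval_bot⟩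
  · obtain ⟨H, hH, heH⟩ := hC.2 e he
    exact ⟨H, Multiset.mem_add.2 (Or.inl hH), heH⟩

theorem exists_isCointervalEdgeCovering [Finite V] (K : SimpleGraph V) :
    ∃ C, IsCointervalEdgeCovering K C := by
  refine ⟨K.edgeSet.toFinite.toFinset.val.map fun e => fromEdgeSet {e}, ?_, ?_⟩
  · simp only [Multiset.mem_map, Finset.mem_val, Set.Finite.mem_toFinset]
    rintro _ ⟨e, he, rfl⟩
    refine ⟨by simp [fromEdgeSet_le, he], ?_⟩
    induction e using Sym2.ind with
    | _ a b => exact isCointerval_edge a b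
  · intro e he
    refine ⟨fromEdgeSet {e}, Multiset.mem_map.2 ⟨e, by simpa using he, rfl⟩, ?_⟩
    simpa using K.not_isDiag_of_mem_edgeSet he

end

/-- Cozzens–Roberts: the boxicity equals the minimum size of a cointerval
edge covering of the complement, and `box(G) ≤ k` iff there exists such a
covering with exactly `k` members. -/
theorem boxicity_eq_min_cointerval_edge_covering {V : Type*} [Fintype V]
    (G : SimpleGraph V) :
    boxicity G = sInf {k | ∃ C : Multiset (SimpleGraph V), C.card = k ∧
        (∀ H ∈ C, H ≤ Gᶜ ∧ IsCointerval H) ∧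
        ∀ e ∈ Gᶜ.edgeSet, ∃ H ∈ C, e ∈ H.edgeSet} ∧
      ∀ k : ℕ, (boxicity G ≤ k ↔ ∃ C : Multiset (SimpleGraph V), C.card = k ∧
        (∀ H ∈ C, H ≤ Gᶜ ∧ IsCointerval H) ∧
        ∀ e ∈ Gᶜ.edgeSet, ∃ H ∈ C, e ∈ H.edgeSet) := by
  have hbox : boxicity G = sInf {k | ∃ C, C.card = k ∧ IsCointervalEdgeCovering Gᶜ C} :=
    congrArg sInf (Set.ext fun _ => hasBoxRep_iff_exists_isCointervalEdgeCovering)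
  refine ⟨hbox, fun k => ⟨fun hk => ?_, fun hC => hbox ▸ Nat.sInf_le hC⟩⟩
  obtain ⟨C₀, hC₀⟩ := exists_isCointervalEdgeCovering Gᶜ
  have hmin : HasBoxRep G (boxicity G) :=
    Nat.sInf_mem (s := {k | HasBoxRep G k})
      ⟨_, hasBoxRep_iff_exists_isCointervalEdgeCovering.2 ⟨C₀, rfl, hC₀⟩⟩
  obtain ⟨C, hcard, hC⟩ := hasBoxRep_iff_exists_isCointervalEdgeCovering.1 hmin
  refine ⟨C + Multiset.replicate (k - C.card) ⊥, ?_, hC.add_replicate_bot _⟩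
  rw [Multiset.card_add, Multiset.card_replicate]
  omega
end

section
/- For every graph G, box(G) ≥ |E(Ḡ)| / |E(Ī_min)|, where I_min is an interval supergraph of G on the same vertex set with minimum number of edges among all such interval supergraphs. -/
/-!
Each coordinate of a box representation of `G` in `ℝ^k` is an interval representation of an
interval supergraph `I_i` of `G`, and a non-edge of `G` must be a non-edge of some `I_i`. Hence
`E(Ḡ)` is covered by the `k` sets `E(Ī_i)`, each of size at most `|E(Ī_min)|` because `I_min`
has the fewest edges among interval supergraphs.
-/

open scoped Classical

open Finset

namespace SimpleGraph

variable {V : Type*}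

def ofIntervals (f : V → ℝ × ℝ) : SimpleGraph V :=
  fromRel fun u v => max (f u).1 (f v).1 ≤ min (f u).2 (f v).2

theorem ofIntervals_adj {f : V → ℝ × ℝ} {u v : V} :
    (ofIntervals f).Adj u v ↔ u ≠ v ∧ max (f u).1 (f v).1 ≤ min (f u).2 (f v).2 := by
  rw [ofIntervals, fromRel_adj, max_comm (f v).1, min_comm (f v).2, or_self]

theorem isIntervalGraph_ofIntervals {f : V → ℝ × ℝ} (hf : ∀ v, (f v).1 ≤ (f v).2) :
    IsIntervalGraph (ofIntervals f) :=
  ⟨f, hf, fun _ _ huv => by rw [ofIntervals_adj, and_iff_right huv]⟩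

theorem card_edgeFinset_compl [Fintype V] [DecidableEq V] (G : SimpleGraph V) :
    #Gᶜ.edgeFinset = #(⊤ : SimpleGraph V).edgeFinset - #G.edgeFinset := by
  rw [← card_sdiff_of_subset (edgeFinset_mono le_top), ← edgeFinset_sdiff]
  congr! 2

theorem card_edgeFinset_compl_le_of_card_le [Fintype V] [DecidableEq V] {G H : SimpleGraph V}
    (h : #G.edgeFinset ≤ #H.edgeFinset) : #Hᶜ.edgeFinset ≤ #Gᶜ.edgeFinset := by
  rw [card_edgeFinset_compl, card_edgeFinset_compl]
  omega

end SimpleGraph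

open SimpleGraph

section BoxRep

variable {V : Type*}

/- Dimension `w` shrinks `w` to the point `0`, its neighbours to `[0, 1]` and every other vertex
to the point `1`, so it separates exactly the non-edges at `w`. -/
theorem hasBoxRep_card [Fintype V] (G : SimpleGraph V) : HasBoxRep G (Fintype.card V) := by
  let e := Fintype.equivFin V
  let f : V → Fin (Fintype.card V) → ℝ × ℝ := fun v i =>
    if v = e.symm i then (0, 0) else if G.Adj v (e.symm i) then (0, 1) else (1, 1)
  refine ⟨f, fun v i => by dsimp only [f]; split_ifs <;> norm_num, fun u v huv => ⟨?_, ?_⟩⟩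
  · intro hadj i
    dsimp only [f]
    split_ifs <;> simp_all [G.adj_comm]
  · intro h
    by_contra hnadj
    have := h (e u)
    norm_num [f, huv.symm, G.adj_comm, hnadj] at this

theorem hasBoxRep_boxicity [Fintype V] (G : SimpleGraph V) : HasBoxRep G (boxicity G) :=
  Nat.sInf_mem (s := {k | HasBoxRep G k}) ⟨_, hasBoxRep_card G⟩

theorem HasBoxRep.card_edgeFinset_compl_le_mul [Fintype V] [DecidableEq V] {G : SimpleGraph V}
    {k m : ℕ} (hG : HasBoxRep G k)
    (hm : ∀ I : SimpleGraph V, IsIntervalGraph I → G ≤ I → #Iᶜ.edgeFinset ≤ m) :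
    #Gᶜ.edgeFinset ≤ k * m := by
  obtain ⟨f, hf, hGf⟩ := hG
  set I : Fin k → SimpleGraph V := fun i => ofIntervals (f · i)
  have hGI : ∀ i, G ≤ I i := fun i u v huv =>
    ofIntervals_adj.2 ⟨huv.ne, (hGf u v huv.ne).1 huv i⟩
  have hcover : Gᶜ.edgeFinset ⊆ univ.biUnion fun i => (I i)ᶜ.edgeFinset := by
    intro e he
    induction e using Sym2.ind with
    | _ u v =>
      obtain ⟨huv, hnadj⟩ := (compl_adj G u v).1 (mem_edgeFinset.1 he)
      obtain ⟨i, hi⟩ := not_forall.1 (mt (hGf u v huv).2 hnadj)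
      exact mem_biUnion.2 ⟨i, mem_univ i, mem_edgeFinset.2
        ((compl_adj _ u v).2 ⟨huv, fun h => hi (ofIntervals_adj.1 h).2⟩)⟩
  calc #Gᶜ.edgeFinset
      ≤ #(univ.biUnion fun i => (I i)ᶜ.edgeFinset) := card_le_card hcover
    _ ≤ ∑ i, #(I i)ᶜ.edgeFinset := card_biUnion_le
    _ ≤ ∑ _i : Fin k, m :=
      sum_le_sum fun i _ => hm _ (isIntervalGraph_ofIntervals fun v => hf v i) (hGI i)
    _ = k * m := by simp

end BoxRep

theorem boxicity_ge_edge_ratio_general {V : Type*} [Fintype V] [DecidableEq V]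
    (G Imin : SimpleGraph V)
    (hmin : ∀ I : SimpleGraph V, IsIntervalGraph I → G ≤ I →
      Imin.edgeFinset.card ≤ I.edgeFinset.card) :
    (Gᶜ.edgeFinset.card : ℝ) / (Iminᶜ.edgeFinset.card : ℝ) ≤ (boxicity G : ℝ) := by
  have hcount : #Gᶜ.edgeFinset ≤ boxicity G * #Iminᶜ.edgeFinset :=
    (hasBoxRep_boxicity G).card_edgeFinset_compl_le_mul fun I hI hGI =>
      card_edgeFinset_compl_le_of_card_le (hmin I hI hGI)
  rcases (Nat.zero_le #Iminᶜ.edgeFinset).eq_or_lt with hm | hm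
  · simp [← hm]
  · rw [div_le_iff₀ (by exact_mod_cast hm)]
    exact_mod_cast hcount

/-- Adiga et al.: lower bound for boxicity via a minimum interval supergraph. -/
theorem boxicity_ge_edge_ratio {V : Type*} [Fintype V] [DecidableEq V]
    (G Imin : SimpleGraph V) (hI : IsIntervalGraph Imin) (hsub : G ≤ Imin)
    (hmin : ∀ I : SimpleGraph V, IsIntervalGraph I → G ≤ I →
      Imin.edgeFinset.card ≤ I.edgeFinset.card) :
    (Gᶜ.edgeFinset.card : ℝ) / (Iminᶜ.edgeFinset.card : ℝ) ≤ (boxicity G : ℝ) :=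
  boxicity_ge_edge_ratio_general G Imin hmin
end

section
/- If Ḡ is edge-transitive, then box_f(G) = |E(Ḡ)| / max{|E_i| : E_i ∈ E(H_G)}, the ratio of the number of edges of Ḡ to the maximum size of an edge set of a cointerval subgraph of Ḡ. -/
open scoped Classical

/-! A largest hyperedge `E₀` bounds `box_f` from below for every graph: summing the covering
constraints over the `|E(Ḡ)|` edges counts each hyperedge at most `|E₀|` times. For the upper
bound, average `E₀` over the automorphism group `Γ` of `Ḡ`, giving each translate `g • E₀` the
weight `|E(Ḡ)| / (|Γ| |E₀|)`. By edge-transitivity every edge lies in the same number of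
translates, and double counting the pairs (edge, `g`) shows this number is `|Γ| |E₀| / |E(Ḡ)|`,
so every edge is covered exactly once. -/

open Finset Pointwise

section DoubleCounting

variable {Γ α : Type*} [Group Γ] [Fintype Γ] [MulAction Γ α] [DecidableEq α]

theorem card_filter_mem_smul_finset_eq_of_smul_eq (F : Finset α) {a b : α} {g : Γ}
    (hab : g • a = b) : #{h : Γ | b ∈ h • F} = #{h : Γ | a ∈ h • F} := by
  subst hab
  refine card_equiv (Equiv.mulLeft g⁻¹) fun h => ?_
  simp [mul_smul, mem_inv_smul_finset_iff]

theorem card_filter_mem_smul_finset_mul_card {D F : Finset α}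
    (hD : ∀ g : Γ, ∀ a ∈ D, g • a ∈ D) (htrans : ∀ a ∈ D, ∀ b ∈ D, ∃ g : Γ, g • a = b)
    (hFD : F ⊆ D) {a : α} (ha : a ∈ D) :
    #{g : Γ | a ∈ g • F} * #D = Fintype.card Γ * #F := by
  have hsmul_sub (g : Γ) : g • F ⊆ D := by
    rintro _ hgb
    obtain ⟨b, hb, rfl⟩ := mem_smul_finset.1 hgb
    exact hD g b (hFD hb)
  calc #{g : Γ | a ∈ g • F} * #D = ∑ b ∈ D, #{g : Γ | b ∈ g • F} := by
        rw [mul_comm, ← smul_eq_mul, ← sum_const]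
        refine sum_congr rfl fun b hb => ?_
        obtain ⟨g, hg⟩ := htrans a ha b hb
        exact (card_filter_mem_smul_finset_eq_of_smul_eq F hg).symm
    _ = ∑ g : Γ, #{b ∈ D | b ∈ g • F} :=
        sum_card_bipartiteAbove_eq_sum_card_bipartiteBelow (fun b (g : Γ) => b ∈ g • F)
    _ = Fintype.card Γ * #F := by
        simp [filter_mem_eq_inter, inter_eq_right.2 (hsmul_sub _), card_smul_finset]

theorem sum_card_filter_smul_finset_eq (F : Finset α) [Fintype α] :
    ∑ E : Finset α, #{g : Γ | g • F = E} = Fintype.card Γ :=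
  (card_eq_sum_card_fiberwise fun _ _ => mem_univ _).symm

theorem sum_ite_mem_card_filter_smul_finset_eq [Fintype α] (F : Finset α) (a : α) :
    ∑ E : Finset α, (if a ∈ E then #{g : Γ | g • F = E} else 0) = #{g : Γ | a ∈ g • F} := by
  rw [card_eq_sum_card_fiberwise (f := (· • F)) (t := univ) fun _ _ => mem_univ _]
  refine sum_congr rfl fun E _ => ?_
  split_ifs with haE
  · congr 1; ext g; simp only [mem_filter, mem_univ, true_and]; grind
  · symm; simp only [card_eq_zero, filter_eq_empty_iff, mem_filter]; grind

end DoubleCounting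

instance Sym2.permMulAction (V : Type*) : MulAction (Equiv.Perm V) (Sym2 V) where
  smul π := Sym2.map π
  one_smul := congrFun Sym2.map_id
  mul_smul π σ e := (Sym2.map_map (g := π) (f := σ) e).symm

theorem Sym2.perm_smul_mk {V : Type*} (π : Equiv.Perm V) (u v : V) :
    π • s(u, v) = s(π u, π v) := rfl

def SimpleGraph.autSubgroup {V : Type*} (H : SimpleGraph V) : Subgroup (Equiv.Perm V) where
  carrier := {π | ∀ u v, H.Adj (π u) (π v) ↔ H.Adj u v}
  mul_mem' hπ hσ u v := (hπ _ _).trans (hσ u v)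
  one_mem' _ _ := Iff.rfl
  inv_mem' {π} hπ u v := by simpa using (hπ (π⁻¹ u) (π⁻¹ v)).symm

theorem SimpleGraph.smul_mem_edgeSet {V : Type*} {H : SimpleGraph V} {π : Equiv.Perm V}
    (hπ : π ∈ H.autSubgroup) {e : Sym2 V} (he : e ∈ H.edgeSet) : π • e ∈ H.edgeSet := by
  induction e with
  | _ u v => exact (hπ u v).2 he

theorem IsIntervalGraph.of_embedding {V W : Type*} {H : SimpleGraph V} {K : SimpleGraph W}
    (φ : H ↪g K) (hK : IsIntervalGraph K) : IsIntervalGraph H := by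
  obtain ⟨f, hf, hadj⟩ := hK
  exact ⟨f ∘ φ, fun v => hf (φ v), fun u v huv => φ.map_adj_iff.symm.trans
    (hadj _ _ (φ.injective.ne huv))⟩

theorem isIntervalGraph_top (V : Type*) : IsIntervalGraph (⊤ : SimpleGraph V) :=
  ⟨fun _ => (0, 0), fun _ => le_rfl, fun u v huv => by simpa using huv⟩

section Hyperedges

variable {V : Type*} (G : SimpleGraph V)

theorem isHyperedge_empty : IsHyperedge G ∅ := by
  refine ⟨by simp, ?_⟩
  simpa [IsCointerval] using isIntervalGraph_top V

theorem isHyperedge_singleton {e : Sym2 V} (he : e ∈ Gᶜ.edgeSet) : IsHyperedge G {e} := by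
  refine ⟨by simpa using he, ?_⟩
  induction e with
  | _ a b =>
    have hab : a ≠ b := (SimpleGraph.mem_edgeSet _).1 he |>.ne
    refine ⟨fun v => (if v = b then 2 else 0, if v = a then 1 else 3),
      fun v => by dsimp only; split_ifs with hb ha <;> norm_num; exact hab (ha.symm.trans hb),
      fun u v huv => ?_⟩
    simp only [SimpleGraph.compl_adj, SimpleGraph.fromEdgeSet_adj, coe_singleton,
      Set.mem_singleton_iff, Sym2.eq_iff]
    by_cases hua : u = a <;> by_cases hub : u = b <;> by_cases hva : v = a <;>
      by_cases hvb : v = b <;> simp_all <;> norm_num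

variable {G}

theorem IsHyperedge.smul [DecidableEq V] {E : Finset (Sym2 V)} (hE : IsHyperedge G E)
    {π : Equiv.Perm V} (hπ : π ∈ Gᶜ.autSubgroup) : IsHyperedge G (π • E) := by
  refine ⟨?_, hE.2.of_embedding ⟨π⁻¹.toEmbedding, fun {u v} => ?_⟩⟩
  · rintro _ hπe
    obtain ⟨e, he, rfl⟩ := mem_smul_finset.1 hπe
    exact SimpleGraph.smul_mem_edgeSet hπ (hE.1 he)
  · simp only [SimpleGraph.compl_adj, SimpleGraph.fromEdgeSet_adj, mem_coe,
      Equiv.toEmbedding_apply, ← Sym2.perm_smul_mk, ← mem_inv_smul_finset_iff, inv_inv]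
    simp

end Hyperedges

section FractionalCover

variable {V : Type*} [Fintype V] (G : SimpleGraph V)

noncomputable def maxHyperedgeCard : ℕ :=
  sSup {m : ℕ | ∃ E : Finset (Sym2 V), IsHyperedge G E ∧ E.card = m}

theorem bddAbove_hyperedge_cards :
    BddAbove {m : ℕ | ∃ E : Finset (Sym2 V), IsHyperedge G E ∧ E.card = m} := by
  refine ⟨Fintype.card (Sym2 V), ?_⟩
  rintro _ ⟨E, -, rfl⟩
  exact card_le_univ E

theorem exists_isHyperedge_card_eq_maxHyperedgeCard :
    ∃ E, IsHyperedge G E ∧ E.card = maxHyperedgeCard G :=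
  Nat.sSup_mem (s := {m : ℕ | ∃ E : Finset (Sym2 V), IsHyperedge G E ∧ E.card = m})
    ⟨0, ∅, isHyperedge_empty G, rfl⟩ (bddAbove_hyperedge_cards G)

variable {G}

theorem IsHyperedge.card_le_maxHyperedgeCard {E : Finset (Sym2 V)} (hE : IsHyperedge G E) :
    E.card ≤ maxHyperedgeCard G :=
  le_csSup (bddAbove_hyperedge_cards G) ⟨E, hE, rfl⟩

variable [DecidableEq V]

theorem card_edgeFinset_div_le_sum_of_cover {x : Finset (Sym2 V) → ℝ} (hx0 : ∀ E, 0 ≤ x E)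
    (hxH : ∀ E, ¬ IsHyperedge G E → x E = 0)
    (hcov : ∀ e ∈ Gᶜ.edgeFinset, 1 ≤ ∑ E : Finset (Sym2 V), if e ∈ E then x E else 0) :
    (#Gᶜ.edgeFinset : ℝ) / maxHyperedgeCard G ≤ ∑ E, x E := by
  have hterm (E : Finset (Sym2 V)) :
      (#{e ∈ Gᶜ.edgeFinset | e ∈ E} : ℝ) * x E ≤ maxHyperedgeCard G * x E := by
    by_cases hE : IsHyperedge G E
    · refine mul_le_mul_of_nonneg_right ?_ (hx0 E)
      exact_mod_cast (card_le_card fun e he => (mem_filter.1 he).2).trans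
        hE.card_le_maxHyperedgeCard
    · simp [hxH E hE]
  refine div_le_of_le_mul₀ (Nat.cast_nonneg _) (sum_nonneg fun E _ => hx0 E) ?_
  calc (#Gᶜ.edgeFinset : ℝ) = ∑ e ∈ Gᶜ.edgeFinset, 1 := by simp
    _ ≤ ∑ e ∈ Gᶜ.edgeFinset, ∑ E : Finset (Sym2 V), if e ∈ E then x E else 0 := sum_le_sum hcov
    _ = ∑ E, (#{e ∈ Gᶜ.edgeFinset | e ∈ E} : ℝ) * x E := by
        rw [sum_comm]
        simp only [← sum_filter, sum_const, nsmul_eq_mul]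
    _ ≤ ∑ E, (maxHyperedgeCard G : ℝ) * x E := sum_le_sum fun E _ => hterm E
    _ = (∑ E, x E) * maxHyperedgeCard G := by rw [← mul_sum, mul_comm]

theorem EdgeTransitiveCompl.card_filter_mem_smul_mul_card (hET : EdgeTransitiveCompl G)
    {E : Finset (Sym2 V)} (hE : IsHyperedge G E) {e : Sym2 V} (he : e ∈ Gᶜ.edgeFinset) :
    #{g : Gᶜ.autSubgroup | e ∈ g • E} * #Gᶜ.edgeFinset =
      Fintype.card Gᶜ.autSubgroup * #E := by
  refine card_filter_mem_smul_finset_mul_card (fun g a ha => ?_) (fun a ha b hb => ?_)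
    (fun e he => ?_) he
  · exact SimpleGraph.mem_edgeFinset.2
      (SimpleGraph.smul_mem_edgeSet g.2 (SimpleGraph.mem_edgeFinset.1 ha))
  · obtain ⟨π, hπ, hπab⟩ := hET a (by simpa using ha) b (by simpa using hb)
    exact ⟨⟨π, fun u v => (hπ u v).symm⟩, hπab⟩
  · simpa using hE.1 he

theorem exists_cover_of_edgeTransitive (hET : EdgeTransitiveCompl G) :
    ∃ x : Finset (Sym2 V) → ℝ, (∀ E, 0 ≤ x E) ∧ (∀ E, ¬ IsHyperedge G E → x E = 0) ∧
      (∀ e ∈ Gᶜ.edgeFinset, 1 ≤ ∑ E : Finset (Sym2 V), if e ∈ E then x E else 0) ∧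
      (#Gᶜ.edgeFinset : ℝ) / maxHyperedgeCard G = ∑ E, x E := by
  obtain ⟨E₀, hE₀, hE₀card⟩ := exists_isHyperedge_card_eq_maxHyperedgeCard G
  set Γ := Gᶜ.autSubgroup
  set κ : ℝ := #Gᶜ.edgeFinset / (Fintype.card Γ * maxHyperedgeCard G)
  have hΓ : (Fintype.card Γ : ℝ) ≠ 0 := by positivity
  refine ⟨fun E => #{g : Γ | g • E₀ = E} * κ, fun E => by positivity, fun E hE => ?_,
    fun e he => ?_, ?_⟩
  · suffices #{g : Γ | g • E₀ = E} = 0 by simp [this]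
    refine card_eq_zero.2 (filter_eq_empty_iff.2 fun g _ hg => hE ?_)
    exact hg ▸ hE₀.smul g.2
  · have hB : 0 < maxHyperedgeCard G := (card_singleton e).ge.trans
      (isHyperedge_singleton G (SimpleGraph.mem_edgeFinset.1 he)).card_le_maxHyperedgeCard
    have hcount : (#{g : Γ | e ∈ g • E₀} : ℝ) * #Gᶜ.edgeFinset =
        Fintype.card Γ * maxHyperedgeCard G := by
      exact_mod_cast hE₀card ▸ hET.card_filter_mem_smul_mul_card hE₀ he
    refine le_of_eq ?_
    calc (1 : ℝ) = #{g : Γ | e ∈ g • E₀} * κ := by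
          rw [mul_div_assoc', hcount, div_self (by positivity)]
      _ = ∑ E : Finset (Sym2 V), if e ∈ E then (#{g : Γ | g • E₀ = E} : ℝ) * κ else 0 := by
          rw [← sum_ite_mem_card_filter_smul_finset_eq E₀ e, Nat.cast_sum, sum_mul]
          simp only [Nat.cast_ite, Nat.cast_zero, ite_mul, zero_mul]
  · rw [← sum_mul, ← Nat.cast_sum, sum_card_filter_smul_finset_eq, mul_div_assoc',
      mul_div_mul_left _ _ hΓ]

end FractionalCover

theorem fracBoxicity_eq_ratio_of_edge_transitive_general {V : Type*} [Fintype V]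
    [DecidableEq V] (G : SimpleGraph V) (hET : EdgeTransitiveCompl G) :
    fracBoxicity G = (Gᶜ.edgeFinset.card : ℝ) /
      ((sSup {m : ℕ | ∃ E : Finset (Sym2 V), IsHyperedge G E ∧ E.card = m} : ℕ) : ℝ) := by
  refine IsLeast.csInf_eq ⟨exists_cover_of_edgeTransitive hET, ?_⟩
  rintro r ⟨x, hx0, hxH, hcov, rfl⟩
  exact card_edgeFinset_div_le_sum_of_cover hx0 hxH hcov

/-- If `Ḡ` is edge-transitive, the fractional boxicity equals the ratio of the
number of edges of `Ḡ` to the maximum hyperedge size of `H_G`. -/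
theorem fracBoxicity_eq_ratio_of_edge_transitive {V : Type*} [Fintype V]
    [DecidableEq V] (G : SimpleGraph V) (hET : EdgeTransitiveCompl G)
    (h : Gᶜ.edgeFinset.Nonempty) :
    fracBoxicity G = (Gᶜ.edgeFinset.card : ℝ) /
      ((sSup {m : ℕ | ∃ E : Finset (Sym2 V), IsHyperedge G E ∧ E.card = m} : ℕ) : ℝ) :=
  fracBoxicity_eq_ratio_of_edge_transitive_general G hET
end

section
/- For any hypergraph H that is vertex-transitive, the fractional covering number of H equals |V(H)| divided by the maximum cardinality of a hyperedge of H. -/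
open scoped Classical

/-!
A fractional cover `x` satisfies `|V| ≤ ∑_v ∑_{X ∋ v} x_X = ∑_X |X| x_X ≤ M ∑_X x_X`, where `M` is
the largest hyperedge size, so its value is at least `|V| / M`. Conversely, let `G` be the
automorphism group and `Y` a largest hyperedge. Since `G` is transitive, every vertex lies in the
same number `|Y| |G| / |V|` of translates `g • Y`, so giving each translate weight `|V| / (|Y| |G|)`
covers every vertex exactly once, at total cost `|V| / |Y| = |V| / M`.
-/

open Finset MulAction
open scoped Pointwise

section

variable {V : Type*} [Fintype V] [DecidableEq V]

theorem card_le_mul_sum_of_fractional_cover {E : Finset (Finset V)} {M : ℕ}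
    (hM : ∀ X ∈ E, #X ≤ M) {x : Finset V → ℝ} (hx : ∀ X ∈ E, 0 ≤ x X)
    (hcov : ∀ v : V, 1 ≤ ∑ X ∈ E, if v ∈ X then x X else 0) :
    (Fintype.card V : ℝ) ≤ M * ∑ X ∈ E, x X :=
  calc (Fintype.card V : ℝ) = ∑ _v : V, (1 : ℝ) := by simp
    _ ≤ ∑ v : V, ∑ X ∈ E, if v ∈ X then x X else 0 := sum_le_sum fun v _ => hcov v
    _ = ∑ X ∈ E, #X * x X := by
      rw [sum_comm]
      refine sum_congr rfl fun X _ => ?_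
      rw [sum_ite_mem, univ_inter, sum_const, nsmul_eq_mul]
    _ ≤ ∑ X ∈ E, M * x X :=
      sum_le_sum fun X hX => mul_le_mul_of_nonneg_right (by exact_mod_cast hM X hX) (hx X hX)
    _ = M * ∑ X ∈ E, x X := (mul_sum ..).symm

variable (G : Type*) [Group G] [Fintype G] [MulAction G V] [IsPretransitive G V]

theorem card_filter_smul_eq_mul_card (u v : V) :
    #{g : G | g • u = v} * Fintype.card V = Fintype.card G := by
  have hfiber (w : V) : #{g : G | g • u = w} = #{g : G | g • u = v} := by
    obtain ⟨h, rfl⟩ := exists_smul_eq G v w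
    refine (card_equiv (Equiv.mulLeft h) fun g => ?_).symm
    simp [mul_smul]
  calc #{g : G | g • u = v} * Fintype.card V = ∑ w, #{g : G | g • u = w} := by
        simp [hfiber, mul_comm]
    _ = Fintype.card G := by simp [sum_card_fiberwise_eq_card_filter]

theorem card_filter_mem_smul_finset_mul_card_s9 (Y : Finset V) (v : V) :
    #{g : G | v ∈ g • Y} * Fintype.card V = #Y * Fintype.card G := by
  have hcount : #{g : G | v ∈ g • Y} = ∑ u ∈ Y, #{g : G | g • u = v} :=
    calc #{g : G | v ∈ g • Y} = #{g : G | g⁻¹ • v ∈ Y} := by simp only [inv_smul_mem_iff]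
      _ = ∑ u ∈ Y, #{g : G | g⁻¹ • v = u} := (sum_card_fiberwise_eq_card_filter _ _ _).symm
      _ = ∑ u ∈ Y, #{g : G | g • u = v} := by simp only [inv_smul_eq_iff, @eq_comm _ v]
  rw [hcount, sum_mul, sum_congr rfl fun u _ => card_filter_smul_eq_mul_card G u v, sum_const,
    smul_eq_mul]

theorem exists_fractional_cover_eq_one_of_isPretransitive {E : Finset (Finset V)}
    (hE : ∀ g : G, ∀ X ∈ E, g • X ∈ E) {Y : Finset V} (hYE : Y ∈ E) (hY : Y.Nonempty) :
    ∃ x : Finset V → ℝ, (∀ X, 0 ≤ x X) ∧ (∀ X ∉ E, x X = 0) ∧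
      (∀ v : V, ∑ X ∈ E, (if v ∈ X then x X else 0) = 1) ∧
      ∑ X ∈ E, x X = Fintype.card V / #Y := by
  set w : ℝ := Fintype.card V / (#Y * Fintype.card G)
  have hYG : (#Y * Fintype.card G : ℝ) ≠ 0 := by have := hY.card_pos; positivity
  have hsum (p : Finset V → Prop) [DecidablePred p] :
      ∑ X ∈ E with p X, #{g : G | g • Y = X} = #{g : G | p (g • Y)} := by
    rw [sum_card_fiberwise_eq_card_filter]
    simp [hE _ _ hYE]
  refine ⟨fun X => w * #{g : G | g • Y = X}, fun X => by positivity, fun X hX => ?_,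
    fun v => ?_, ?_⟩
  · simp [filter_false_of_mem fun g _ (h : g • Y = X) => hX (h ▸ hE g Y hYE)]
  · have hcount : (#{g : G | v ∈ g • Y} * Fintype.card V : ℝ) = #Y * Fintype.card G := by
      exact_mod_cast card_filter_mem_smul_finset_mul_card_s9 G Y v
    rw [← sum_filter, ← mul_sum, ← Nat.cast_sum, hsum, div_mul_eq_mul_div, mul_comm, hcount,
      div_self hYG]
  · have htotal := hsum fun _ => True
    simp only [filter_true, card_univ] at htotal
    rw [← mul_sum, ← Nat.cast_sum, htotal, div_mul_eq_mul_div,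
      mul_div_mul_right _ _ (Nat.cast_ne_zero.2 Fintype.card_ne_zero)]

end

theorem fractional_covering_of_vertex_transitive_general {V : Type*} [Fintype V]
    [DecidableEq V] (E : Finset (Finset V))
    (hcov : ∀ v : V, ∃ X ∈ E, v ∈ X)
    (hVT : ∀ u v : V, ∃ π : Equiv.Perm V,
      (∀ X : Finset V, X ∈ E ↔ X.image π ∈ E) ∧ π u = v) :
    sInf {r : ℝ | ∃ x : Finset V → ℝ, (∀ X, 0 ≤ x X) ∧ (∀ X ∉ E, x X = 0) ∧
        (∀ v : V, 1 ≤ ∑ X ∈ E, if v ∈ X then x X else 0) ∧ r = ∑ X ∈ E, x X}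
      = (Fintype.card V : ℝ) / ((sSup {m : ℕ | ∃ X ∈ E, X.card = m} : ℕ) : ℝ) := by
  rcases isEmpty_or_nonempty V with hV | ⟨⟨v₀⟩⟩
  · rw [Fintype.card_eq_zero, Nat.cast_zero, zero_div]
    refine IsLeast.csInf_eq ⟨⟨0, fun _ => le_rfl, fun _ _ => rfl, isEmptyElim, by simp⟩, ?_⟩
    rintro r ⟨x, hx, -, -, rfl⟩
    exact sum_nonneg fun X _ => hx X
  set M := sSup {m : ℕ | ∃ X ∈ E, #X = m}
  have hbdd : BddAbove {m : ℕ | ∃ X ∈ E, #X = m} :=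
    ⟨Fintype.card V, by rintro _ ⟨X, -, rfl⟩; exact card_le_univ X⟩
  obtain ⟨X₀, hX₀E, hv₀⟩ := hcov v₀
  have hM : ∀ X ∈ E, #X ≤ M := fun X hX => le_csSup hbdd ⟨X, hX, rfl⟩
  have hMmem : M ∈ {m : ℕ | ∃ X ∈ E, #X = m} := Nat.sSup_mem ⟨_, X₀, hX₀E, rfl⟩ hbdd
  obtain ⟨Y, hYE, hYM⟩ := hMmem
  have hY : Y.Nonempty := card_pos.1 (hYM ▸ (card_pos.2 ⟨v₀, hv₀⟩).trans_le (hM X₀ hX₀E))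
  have : IsPretransitive (stabilizer (Equiv.Perm V) E) V := ⟨fun u v => by
    obtain ⟨π, hπ, rfl⟩ := hVT u v
    exact ⟨⟨π, mem_stabilizer_finset.2 fun X => (hπ X).symm⟩, rfl⟩⟩
  obtain ⟨x, hx0, hxE, hxcov, hxsum⟩ := exists_fractional_cover_eq_one_of_isPretransitive
    (stabilizer (Equiv.Perm V) E) (fun g _ hX => mem_stabilizer_finset'.1 g.2 hX) hYE hY
  refine IsLeast.csInf_eq ⟨⟨x, hx0, hxE, fun v => (hxcov v).ge, by rw [hxsum, hYM]⟩, ?_⟩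
  rintro r ⟨y, hy0, -, hycov, rfl⟩
  rw [div_le_iff₀ (by rw [← hYM]; exact_mod_cast hY.card_pos), mul_comm]
  exact card_le_mul_sum_of_fractional_cover hM (fun X _ => hy0 X) hycov

/-- Scheinerman–Ullman, Proposition 1.3.4: the fractional covering number of a
vertex-transitive hypergraph equals `|V| / (maximum hyperedge size)`. -/
theorem fractional_covering_of_vertex_transitive {V : Type*} [Fintype V]
    [DecidableEq V] (E : Finset (Finset V))
    (hne : ∀ X ∈ E, X.Nonempty) (hcov : ∀ v : V, ∃ X ∈ E, v ∈ X)
    (hVT : ∀ u v : V, ∃ π : Equiv.Perm V,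
      (∀ X : Finset V, X ∈ E ↔ X.image π ∈ E) ∧ π u = v) :
    sInf {r : ℝ | ∃ x : Finset V → ℝ, (∀ X, 0 ≤ x X) ∧ (∀ X ∉ E, x X = 0) ∧
        (∀ v : V, 1 ≤ ∑ X ∈ E, if v ∈ X then x X else 0) ∧ r = ∑ X ∈ E, x X}
      = (Fintype.card V : ℝ) / ((sSup {m : ℕ | ∃ X ∈ E, X.card = m} : ℕ) : ℝ) :=
  fractional_covering_of_vertex_transitive_general E hcov hVT
end

section
/- Let G = K_{n_1,...,n_k} be the complete k-partite graph with all parts of size at least 2 (so box(G) = k). Then for every positive integer s, the s-fold boxicity satisfies box_s(G) = s·k. -/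
open scoped Classical

/-!
Every part `i` of `K_{n_1,...,n_k}` gives an edge `⟨i,0⟩⟨i,1⟩` of the complement. A cointerval
subgraph of the complement contains edges of at most one part: two edges in different parts would
span an induced four-cycle in its complement, which is an interval graph. So the `s`-fold cover of
these `k` edges needs `s * k` subgraphs, and the `k` part cliques, each taken `s` times, achieve it.
-/

open SimpleGraph

theorem Multiset.sum_countP_le_card {ι α : Type*} (t : Finset ι) (C : Multiset α)
    (p : ι → α → Prop) (hp : ∀ a ∈ C, ∀ i ∈ t, ∀ j ∈ t, p i a → p j a → i = j) :
    ∑ i ∈ t, C.countP (p i) ≤ Multiset.card C := by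
  induction C using Multiset.induction with
  | empty => simp
  | cons a C ih =>
    have hC := ih fun b hb => hp b (Multiset.mem_cons_of_mem hb)
    have ha : (t.filter (p · a)).card ≤ 1 := Finset.card_le_one.mpr fun i hi j hj => by
      rw [Finset.mem_filter] at hi hj
      exact hp a (Multiset.mem_cons_self a C) i hi.1 j hj.1 hi.2 hj.2
    simp only [Multiset.countP_cons, Finset.sum_add_distrib, Multiset.card_cons,
      ← Finset.card_filter]
    omega

section Interval

variable {V : Type*} {G H : SimpleGraph V}

-- If the intervals of `a` and `b` are disjoint, those of `c` and `d` both contain the gap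
-- between them.
theorem IsIntervalGraph.adj_or_adj_of_four_cycle (hG : IsIntervalGraph G) {a b c d : V}
    (hab : a ≠ b) (hcd : c ≠ d) (hac : G.Adj a c) (had : G.Adj a d) (hbc : G.Adj b c)
    (hbd : G.Adj b d) : G.Adj a b ∨ G.Adj c d := by
  obtain ⟨f, -, hf⟩ := hG
  rw [hf a b hab, hf c d hcd]
  rw [hf a c hac.ne] at hac
  rw [hf a d had.ne] at had
  rw [hf b c hbc.ne] at hbc
  rw [hf b d hbd.ne] at hbd
  simp only [max_le_iff, le_min_iff] at hac had hbc hbd ⊢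
  grind

theorem IsCointerval.eq_of_adj_of_adj {ι : Type*} {π : V → ι} (hH : IsCointerval H)
    (hπ : ∀ u v, H.Adj u v → π u = π v) {a b c d : V} (hab : H.Adj a b) (hcd : H.Adj c d) :
    π a = π c := by
  by_contra hac
  have cross : ∀ u v, π u ≠ π v → Hᶜ.Adj u v := fun u v huv =>
    ⟨ne_of_apply_ne π huv, fun h => huv (hπ u v h)⟩
  have hb := hπ a b hab
  have hd := hπ c d hcd
  rcases hH.adj_or_adj_of_four_cycle hab.ne hcd.ne (cross a c hac) (cross a d (by rwa [← hd]))
      (cross b c (by rwa [← hb])) (cross b d (by rwa [← hb, ← hd])) with h | h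
  · exact h.2 hab
  · exact h.2 hcd

def cliqueOn (S : Set V) : SimpleGraph V :=
  SimpleGraph.fromRel fun a b => a ∈ S ∧ b ∈ S

theorem cliqueOn_adj {S : Set V} {u v : V} : (cliqueOn S).Adj u v ↔ u ≠ v ∧ u ∈ S ∧ v ∈ S := by
  simp only [cliqueOn, fromRel_adj]
  tauto

-- `S` gets distinct point intervals, every other vertex one interval containing them all.
theorem isCointerval_cliqueOn [Finite V] (S : Set V) : IsCointerval (cliqueOn S) := by
  obtain ⟨N, ⟨e⟩⟩ := Finite.exists_equiv_fin V
  refine ⟨fun v => if v ∈ S then ((e v : ℝ), (e v : ℝ)) else (0, N), fun v => ?_,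
    fun u v huv => ?_⟩
  · dsimp only
    split_ifs <;> simp
  · have hlt : ∀ w, (e w : ℝ) ≤ N := fun w => by exact_mod_cast (e w).isLt.le
    rw [compl_adj, cliqueOn_adj]
    by_cases hu : u ∈ S <;> by_cases hv : v ∈ S <;>
      simp [hu, hv, huv, hlt, lt_iff_le_and_ne, (e.injective.ne huv).symm]

end Interval

def IsCointervalCover {V : Type*} (G : SimpleGraph V) (s : ℕ) (C : Multiset (SimpleGraph V)) :
    Prop :=
  (∀ H ∈ C, H ≤ Gᶜ ∧ IsCointerval H) ∧ ∀ e ∈ Gᶜ.edgeSet, s ≤ C.countP (e ∈ ·.edgeSet)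

theorem boxS_eq_of_isCointervalCover {V : Type*} {G : SimpleGraph V} {s : ℕ}
    {C : Multiset (SimpleGraph V)} (hC : IsCointervalCover G s C)
    (hmin : ∀ D, IsCointervalCover G s D → Multiset.card C ≤ Multiset.card D) :
    boxS G s = Multiset.card C :=
  IsLeast.csInf_eq ⟨⟨C, rfl, hC⟩, fun _ ⟨D, hD, hDC⟩ => hD ▸ hmin D hDC⟩

section CompleteMultipartite

variable {k : ℕ} {n : Fin k → ℕ}

theorem compl_completeMultipartite_adj {u v : Σ i : Fin k, Fin (n i)} :
    (completeMultipartite k n)ᶜ.Adj u v ↔ u ≠ v ∧ u.1 = v.1 := by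
  simp only [completeMultipartite, compl_adj, fromRel_adj]
  tauto

variable (k n) in
def partCliques : Multiset (SimpleGraph (Σ i : Fin k, Fin (n i))) :=
  Finset.univ.val.map fun i => cliqueOn {v | v.1 = i}

theorem isCointervalCover_partCliques (s : ℕ) :
    IsCointervalCover (completeMultipartite k n) s (s • partCliques k n) := by
  refine ⟨fun H hH => ?_, fun e he => ?_⟩
  · obtain ⟨i, -, rfl⟩ := Multiset.mem_map.mp (Multiset.mem_of_mem_nsmul hH)
    refine ⟨fun u v huv => ?_, isCointerval_cliqueOn _⟩
    obtain ⟨hne, hu, hv⟩ := cliqueOn_adj.mp huv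
    exact compl_completeMultipartite_adj.mpr ⟨hne, hu.trans hv.symm⟩
  · induction e using Sym2.ind with
    | _ u v =>
      obtain ⟨hne, huv⟩ := compl_completeMultipartite_adj.mp he
      have hpos : 0 < (partCliques k n).countP (s(u, v) ∈ ·.edgeSet) :=
        Multiset.countP_pos.mpr ⟨_, Multiset.mem_map_of_mem _ (Finset.mem_univ u.1),
          cliqueOn_adj.mpr ⟨hne, rfl, huv.symm⟩⟩
      rw [Multiset.countP_nsmul]
      exact Nat.le_mul_of_pos_right s hpos

theorem mul_le_card_of_isCointervalCover (hn : ∀ i, 2 ≤ n i) {s : ℕ}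
    {C : Multiset (SimpleGraph (Σ i : Fin k, Fin (n i)))}
    (hC : IsCointervalCover (completeMultipartite k n) s C) : s * k ≤ Multiset.card C := by
  let edge (i : Fin k) : Sym2 (Σ i : Fin k, Fin (n i)) :=
    s(⟨i, ⟨0, zero_lt_two.trans_le (hn i)⟩⟩, ⟨i, ⟨1, hn i⟩⟩)
  have hedge (i : Fin k) : edge i ∈ (completeMultipartite k n)ᶜ.edgeSet :=
    compl_completeMultipartite_adj.mpr ⟨by simp, rfl⟩
  calc s * k = ∑ _i : Fin k, s := by simp [mul_comm]
    _ ≤ ∑ i, C.countP (edge i ∈ ·.edgeSet) :=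
      Finset.sum_le_sum fun i _ => hC.2 _ (hedge i)
    _ ≤ Multiset.card C := Multiset.sum_countP_le_card _ _ _ fun H hH i _ j _ hi hj =>
      (hC.1 H hH).2.eq_of_adj_of_adj (π := Sigma.fst)
        (fun u v huv => (compl_completeMultipartite_adj.mp ((hC.1 H hH).1 huv)).2) hi hj

end CompleteMultipartite

theorem boxS_completeMultipartite_general (k : ℕ) (n : Fin k → ℕ) (hn : ∀ i, 2 ≤ n i)
    (s : ℕ) :
    boxS (completeMultipartite k n) s = s * k := by
  have hcard : Multiset.card (s • partCliques k n) = s * k := by simp [partCliques]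
  rw [← hcard]
  exact boxS_eq_of_isCointervalCover (isCointervalCover_partCliques s) fun D hD =>
    hcard ▸ mul_le_card_of_isCointervalCover hn hD

/-- For a complete multipartite graph with all parts of size at least two, the
`s`-fold boxicity equals `s·k`. -/
theorem boxS_completeMultipartite (k : ℕ) (n : Fin k → ℕ) (hn : ∀ i, 2 ≤ n i)
    (s : ℕ) (hs : 1 ≤ s) :
    boxS (completeMultipartite k n) s = s * k :=
  boxS_completeMultipartite_general k n hn s
end

section
/- The maximum number of edges of a cointerval subgraph of a disjoint union of cliques K_{n_1} ∪ ... ∪ K_{n_k} (with n_1 ≥ n_i for all i) is C(n_1, 2). -/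
open scoped Classical

/-!
The complement of a cointerval graph is an interval graph, which has no induced 4-cycle; hence a
cointerval graph has no induced `2K₂`, i.e. any two of its edges are joined by an edge. In a
disjoint union of cliques, edges from different cliques are not joined, so a cointerval subgraph
lives inside a single clique `K_{n_i}` and has at most `C(n_i, 2) ≤ C(n_1, 2)` edges. Conversely
a clique with isolated vertices is cointerval: in the complement, represent the clique's vertices
by distinct points and every other vertex by one interval containing all of them.
-/

lemma lt_or_lt_of_not_max_le_min {α : Type*} [LinearOrder α] {a₁ a₂ b₁ b₂ : α}
    (ha : a₁ ≤ a₂) (hb : b₁ ≤ b₂) (h : ¬ max a₁ b₁ ≤ min a₂ b₂) : a₂ < b₁ ∨ b₂ < a₁ := by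
  simp only [max_le_iff, le_min_iff, not_and_or, not_le] at h
  rcases h with (h | h) | (h | h)
  · exact absurd h ha.not_gt
  · exact Or.inl h
  · exact Or.inr h
  · exact absurd h hb.not_gt

theorem IsIntervalGraph.adj_or_adj_of_cycle4 {V : Type*} {G : SimpleGraph V}
    (hG : IsIntervalGraph G) {a b c d : V} (hab : a ≠ b) (hcd : c ≠ d)
    (hac : G.Adj a c) (had : G.Adj a d) (hbc : G.Adj b c) (hbd : G.Adj b d) :
    G.Adj a b ∨ G.Adj c d := by
  obtain ⟨f, hf, hG⟩ := hG
  by_contra! h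
  have hab' := lt_or_lt_of_not_max_le_min (hf a) (hf b) (mt (hG a b hab).2 h.1)
  have hcd' := lt_or_lt_of_not_max_le_min (hf c) (hf d) (mt (hG c d hcd).2 h.2)
  have hac' := (hG a c hac.ne).1 hac
  have had' := (hG a d had.ne).1 had
  have hbc' := (hG b c hbc.ne).1 hbc
  have hbd' := (hG b d hbd.ne).1 hbd
  simp only [max_le_iff, le_min_iff] at hac' had' hbc' hbd'
  -- with `f a` left of `f b` and `f c` left of `f d`: `(f d).1 ≤ (f a).2 < (f b).1 ≤ (f c).2 < (f d).1`
  rcases hab' with hab' | hab' <;> rcases hcd' with hcd' | hcd' <;> linarith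

theorem IsCointerval.adj_between_of_adj_of_adj {V : Type*} {H : SimpleGraph V}
    (hH : IsCointerval H) {a b c d : V} (hab : H.Adj a b) (hcd : H.Adj c d) :
    H.Adj a c ∨ H.Adj a d ∨ H.Adj b c ∨ H.Adj b d := by
  by_contra! h
  obtain ⟨hac, had, hbc, hbd⟩ := h
  have compl_adj {x y : V} (hxy : x ≠ y) (h : ¬ H.Adj x y) : Hᶜ.Adj x y := ⟨hxy, h⟩
  rcases hH.adj_or_adj_of_cycle4 hab.ne hcd.ne
    (compl_adj (by rintro rfl; exact had hcd) hac) (compl_adj (by rintro rfl; exact hac hcd.symm) had)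
    (compl_adj (by rintro rfl; exact hbd hcd) hbc) (compl_adj (by rintro rfl; exact hbc hcd.symm) hbd)
    with h | h
  · exact h.2 hab
  · exact h.2 hcd

lemma map_top_adj {V W : Type*} (f : W ↪ V) {u v : V} :
    ((⊤ : SimpleGraph W).map f).Adj u v ↔ u ≠ v ∧ u ∈ Set.range f ∧ v ∈ Set.range f := by
  constructor
  · rintro ⟨-, x, y, hxy, rfl, rfl⟩
    exact ⟨f.injective.ne hxy, ⟨x, rfl⟩, ⟨y, rfl⟩⟩
  · rintro ⟨huv, ⟨x, rfl⟩, ⟨y, rfl⟩⟩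
    exact ⟨huv, x, y, f.injective.ne_iff.1 huv, rfl, rfl⟩

theorem isCointerval_map_top {V W : Type*} [Fintype V] (f : W ↪ V) :
    IsCointerval ((⊤ : SimpleGraph W).map f) := by
  let e : V → ℝ := fun v => (Fintype.equivFin V v : ℕ)
  have he : ∀ v, 0 ≤ e v ∧ e v ≤ Fintype.card V := fun v =>
    ⟨Nat.cast_nonneg _, Nat.cast_le.2 (Fintype.equivFin V v).is_lt.le⟩
  refine ⟨fun v => if v ∈ Set.range f then (e v, e v) else (-1, Fintype.card V), ?_, ?_⟩
  · intro v
    dsimp only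
    split_ifs
    · exact le_rfl
    · linarith [he v]
  · intro u v huv
    rw [SimpleGraph.compl_adj, map_top_adj]
    obtain ⟨hu₀, hu₁⟩ := he u
    obtain ⟨hv₀, hv₁⟩ := he v
    by_cases hfu : u ∈ Set.range f <;> by_cases hfv : v ∈ Set.range f <;>
      simp only [hfu, hfv, huv, if_true, if_false, max_le_iff, le_min_iff, ne_eq, not_false_eq_true,
        and_true, and_false, not_true_eq_false]
    · have he_inj : Function.Injective e := fun x y h =>
        (Fintype.equivFin V).injective (Fin.ext (Nat.cast_injective h))
      exact iff_of_false id fun h => huv (he_inj (le_antisymm h.2.1 h.1.2))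
    all_goals exact iff_of_true trivial (by refine ⟨⟨?_, ?_⟩, ?_, ?_⟩ <;> linarith)

lemma card_edgeFinset_map_top {V W : Type*} [Fintype V] [Fintype W] (f : W ↪ V)
    [Fintype ((⊤ : SimpleGraph W).map f).edgeSet] :
    ((⊤ : SimpleGraph W).map f).edgeFinset.card = (Fintype.card W).choose 2 := by
  classical
  convert SimpleGraph.card_edgeFinset_map f ⊤
  exact SimpleGraph.card_edgeFinset_top_eq_card_choose_two.symm

lemma cliqueUnion_adj {k : ℕ} {n : Fin k → ℕ} {a b : Σ i : Fin k, Fin (n i)} :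
    (cliqueUnion k n).Adj a b ↔ a ≠ b ∧ a.1 = b.1 := by
  simp [cliqueUnion, eq_comm]

lemma map_sigmaMk_top_le_cliqueUnion (k : ℕ) (n : Fin k → ℕ) (i : Fin k) :
    (⊤ : SimpleGraph (Fin (n i))).map (Function.Embedding.sigmaMk i) ≤ cliqueUnion k n := by
  rintro _ _ ⟨huv, x, y, -, rfl, rfl⟩
  exact cliqueUnion_adj.2 ⟨huv, rfl⟩

lemma mem_range_sigmaMk {ι : Type*} {α : ι → Type*} {i : ι} {w : Σ i, α i} :
    w ∈ Set.range (Function.Embedding.sigmaMk (β := α) i) ↔ w.1 = i :=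
  Set.ext_iff.1 (Set.range_sigmaMk i) w

theorem IsCointerval.le_map_sigmaMk_top {k : ℕ} {n : Fin k → ℕ}
    {H : SimpleGraph (Σ i : Fin k, Fin (n i))} (hH : IsCointerval H) (hle : H ≤ cliqueUnion k n)
    {a b : Σ i : Fin k, Fin (n i)} (hab : H.Adj a b) :
    H ≤ (⊤ : SimpleGraph (Fin (n a.1))).map (Function.Embedding.sigmaMk a.1) := by
  have fst_eq {u v} (h : H.Adj u v) : u.1 = v.1 := (cliqueUnion_adj.1 (hle h)).2
  intro u v huv
  have hu : u.1 = a.1 := by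
    rcases hH.adj_between_of_adj_of_adj huv hab with h | h | h | h <;>
      grind [fst_eq h, fst_eq hab, fst_eq huv]
  rw [map_top_adj]
  exact ⟨huv.ne, mem_range_sigmaMk.2 hu, mem_range_sigmaMk.2 ((fst_eq huv).symm.trans hu)⟩

/-- The maximum number of edges of a cointerval subgraph of a disjoint union of
cliques is attained by a largest clique and equals `C(n₁, 2)`. -/
theorem max_cointerval_subgraph_of_cliqueUnion (k : ℕ) (hk : 0 < k)
    (n : Fin k → ℕ) (hmax : ∀ i, n i ≤ n ⟨0, hk⟩) :
    IsGreatest {m : ℕ | ∃ H : SimpleGraph (Σ i : Fin k, Fin (n i)),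
        H ≤ cliqueUnion k n ∧ IsCointerval H ∧ H.edgeFinset.card = m}
      ((n ⟨0, hk⟩).choose 2) := by
  refine ⟨⟨_, map_sigmaMk_top_le_cliqueUnion k n ⟨0, hk⟩, isCointerval_map_top _, ?_⟩, ?_⟩
  · rw [card_edgeFinset_map_top, Fintype.card_fin]
  rintro m ⟨H, hle, hH, rfl⟩
  rcases eq_or_ne H ⊥ with hbot | hne
  · simp [SimpleGraph.edgeFinset_eq_empty.2 hbot]
  obtain ⟨a, b, hab⟩ := SimpleGraph.ne_bot_iff_exists_adj.1 hne
  calc H.edgeFinset.card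
      ≤ ((⊤ : SimpleGraph (Fin (n a.1))).map (Function.Embedding.sigmaMk a.1)).edgeFinset.card :=
        Finset.card_le_card (SimpleGraph.edgeFinset_mono (hH.le_map_sigmaMk_top hle hab))
    _ = (n a.1).choose 2 := by rw [card_edgeFinset_map_top, Fintype.card_fin]
    _ ≤ (n ⟨0, hk⟩).choose 2 := Nat.choose_le_choose 2 (hmax a.1)
end

section
/- The boxicity of the complete multipartite graph K_{n_1,...,n_k} equals the number of indices i with n_i ≥ 2. -/
open scoped Classical

/-! Each part of size at least two gets its own coordinate, in which its vertices are distinct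
points and every other vertex is a long interval; this realises `K_{n_1,…,n_k}` in that many
dimensions. Conversely, a non-adjacent pair `{u, v}` must be separated in some coordinate, and two
such pairs taken from different parts cannot be separated in the same coordinate: there the four
cross pairs meet, and two intervals meeting two disjoint intervals meet each other. -/

def IntervalsMeet (I J : ℝ × ℝ) : Prop :=
  max I.1 J.1 ≤ min I.2 J.2

lemma IntervalsMeet.of_meet_disjoint {I₁ I₂ J₁ J₂ : ℝ × ℝ} (hI₁ : I₁.1 ≤ I₁.2)
    (hI₂ : I₂.1 ≤ I₂.2) (hI : ¬ IntervalsMeet I₁ I₂) (h₁₁ : IntervalsMeet I₁ J₁)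
    (h₁₂ : IntervalsMeet I₁ J₂) (h₂₁ : IntervalsMeet I₂ J₁) (h₂₂ : IntervalsMeet I₂ J₂) :
    IntervalsMeet J₁ J₂ := by
  simp only [IntervalsMeet, max_le_iff, le_min_iff, not_and_or, not_le] at *
  refine ⟨⟨?_, ?_⟩, ?_, ?_⟩ <;> rcases hI with (h | h) | (h | h) <;> linarith

lemma hasBoxRep_of_fintype {V ι : Type*} [Fintype ι] {G : SimpleGraph V} (f : V → ι → ℝ × ℝ)
    (hf : ∀ v i, (f v i).1 ≤ (f v i).2)
    (hadj : ∀ u v, u ≠ v → (G.Adj u v ↔ ∀ i, IntervalsMeet (f u i) (f v i))) :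
    HasBoxRep G (Fintype.card ι) :=
  let e := (Fintype.equivFin ι).symm
  ⟨fun v d => f v (e d), fun v d => hf v (e d),
    fun u v huv => (hadj u v huv).trans e.forall_congr_right.symm⟩

lemma HasBoxRep.card_le_of_joined_nonAdj {V ι : Type*} [Fintype ι] {G : SimpleGraph V} {m : ℕ}
    (h : HasBoxRep G m) (w : ι → Fin 2 → V) (hne : ∀ x, w x 0 ≠ w x 1)
    (hnadj : ∀ x, ¬ G.Adj (w x 0) (w x 1))
    (hjoin : ∀ x y, x ≠ y → ∀ a b, G.Adj (w x a) (w y b)) :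
    Fintype.card ι ≤ m := by
  obtain ⟨f, hf, hadj⟩ := h
  have hsep : ∀ x, ∃ d, ¬ IntervalsMeet (f (w x 0) d) (f (w x 1) d) := fun x =>
    not_forall.1 (mt (hadj _ _ (hne x)).2 (hnadj x))
  choose D hD using hsep
  have hDinj : Function.Injective D := by
    intro x y hxy
    by_contra hxy'
    have hmeet : ∀ a b, IntervalsMeet (f (w x a) (D x)) (f (w y b) (D x)) := fun a b =>
      (hadj _ _ (hjoin x y hxy' a b).ne).1 (hjoin x y hxy' a b) (D x)
    exact hD y (hxy ▸ IntervalsMeet.of_meet_disjoint (hf _ _) (hf _ _) (hD x)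
      (hmeet 0 0) (hmeet 0 1) (hmeet 1 0) (hmeet 1 1))
  simpa using Fintype.card_le_of_injective D hDinj

lemma boxicity_eq_of_hasBoxRep {V : Type*} {G : SimpleGraph V} {k : ℕ} (h : HasBoxRep G k)
    (hle : ∀ m, HasBoxRep G m → k ≤ m) : boxicity G = k :=
  le_antisymm (Nat.sInf_le h) (le_csInf ⟨k, h⟩ hle)

lemma completeMultipartite_adj {k : ℕ} {n : Fin k → ℕ} {a b : Σ i : Fin k, Fin (n i)} :
    (completeMultipartite k n).Adj a b ↔ a.1 ≠ b.1 := by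
  simp only [completeMultipartite, SimpleGraph.fromRel_adj, ne_comm (a := b.1), or_self]
  exact ⟨And.right, fun h => ⟨fun hab => h (congrArg Sigma.fst hab), h⟩⟩

lemma completeMultipartite_hasBoxRep (k : ℕ) (n : Fin k → ℕ) :
    HasBoxRep (completeMultipartite k n) (Fintype.card {i : Fin k // 2 ≤ n i}) := by
  refine hasBoxRep_of_fintype
    (fun v j => if v.1 = j then ((v.2 : ℝ), (v.2 : ℝ)) else (0, (n j : ℝ))) ?_ ?_
  · intro v j
    split_ifs <;> simp
  rintro ⟨i, a⟩ ⟨i', b⟩ hne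
  rw [completeMultipartite_adj]
  constructor
  · intro hii' j
    have ha : (a : ℝ) ≤ n i := by exact_mod_cast a.isLt.le
    have hb : (b : ℝ) ≤ n i' := by exact_mod_cast b.isLt.le
    simp only [IntervalsMeet]
    split_ifs with hij hi'j hi'j
    · exact absurd (hij.trans hi'j.symm) hii'
    · rw [← hij]
      simp [ha]
    · rw [← hi'j]
      simp [hb]
    · simp
  · intro hmeet hii'
    subst hii'
    have hab : a ≠ b := fun h => hne (h ▸ rfl)
    have h2 : 2 ≤ n i := by have := Fin.val_ne_of_ne hab; omega
    have hpoints := hmeet ⟨i, h2⟩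
    simp only [IntervalsMeet, if_true, max_le_iff, le_min_iff] at hpoints
    exact hab (Fin.ext (by exact_mod_cast le_antisymm hpoints.2.1 hpoints.1.2))

/-- Roberts: the boxicity of a complete multipartite graph equals the number of
parts of size at least two. -/
theorem boxicity_completeMultipartite (k : ℕ) (n : Fin k → ℕ) :
    boxicity (completeMultipartite k n) =
      (Finset.univ.filter (fun i : Fin k => 2 ≤ n i)).card := by
  rw [← Fintype.card_subtype]
  refine boxicity_eq_of_hasBoxRep (completeMultipartite_hasBoxRep k n) fun m hm => ?_
  refine hm.card_le_of_joined_nonAdj (fun x a => ⟨x, Fin.castLE x.2 a⟩) ?_ ?_ ?_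
  · simp
  · simp [completeMultipartite_adj]
  · intro x y hxy a b
    exact completeMultipartite_adj.2 fun h => hxy (Subtype.ext h)
end
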